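/- For every k ≥ 1, f(k+1)/2 = ⌊(2^{k+1}−1)/3⌋, i.e., the number of edges added by the algorithm on a complete binary tree with n = 2^{k+1}−1 vertices equals ⌊n/3⌋. -/

import Mathlib

/-!
Subtracting the defining sums of two consecutive terms gives the linear recurrence
`f (k + 2) = f (k + 1) + 2 f k + 2`, whose solution is `3 f k = 2 ^ (k + 1) - 2 - 2 (k % 2)`.
Hence `f (k + 1) / 2 = (2 ^ (k + 1) - 1 - (k + 1) % 2) / 3`, and since that numerator is
divisible by `3` and differs from `2 ^ (k + 1) - 1` by at most `1`, it is the floor of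
`(2 ^ (k + 1) - 1) / 3`.
-/

def addedEdges : ℕ → ℕ
  | 0 => 0
  | 1 => 0
  | k + 2 => 2 * (k + 1) + 2 * ∑ i ∈ (Finset.range (k + 1)).attach,
      addedEdges i.1
  decreasing_by
    have h := Finset.mem_range.mp i.2
    omega

lemma addedEdges_add_two (k : ℕ) :
    addedEdges (k + 2) = 2 * (k + 1) + 2 * ∑ i ∈ Finset.range (k + 1), addedEdges i := by
  rw [addedEdges, ← Finset.sum_attach (Finset.range (k + 1)) addedEdges]

lemma addedEdges_add_two_eq (k : ℕ) :
    addedEdges (k + 2) = addedEdges (k + 1) + 2 * addedEdges k + 2 := by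
  cases k with
  | zero => simp [addedEdges_add_two, addedEdges]
  | succ k =>
    rw [addedEdges_add_two, addedEdges_add_two, Finset.sum_range_succ]
    ring

lemma three_mul_addedEdges_add (k : ℕ) :
    3 * addedEdges k + 2 * (k % 2) + 2 = 2 ^ (k + 1) := by
  induction k using Nat.twoStepInduction with
  | zero => simp [addedEdges]
  | one => simp [addedEdges]
  | more k ih₀ ih₁ =>
    rw [addedEdges_add_two_eq, pow_succ, pow_succ]
    rw [pow_succ] at ih₁
    omega

theorem addedEdges_floor_general (k : ℕ) :
    addedEdges (k + 1) / 2 = (2 ^ (k + 1) - 1) / 3 := by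
  have h := three_mul_addedEdges_add (k + 1)
  rw [pow_succ] at h
  omega

theorem addedEdges_floor (k : ℕ) (hk : 1 ≤ k) :
    addedEdges (k + 1) / 2 = (2 ^ (k + 1) - 1) / 3 :=
  addedEdges_floor_general k
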